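/- Let X₁,…,X_d be independent with X_i ~ N(m_i, 1), and for λ ≥ 0 define the soft-thresholding estimator η_λ(X)_i = sign(X_i)(|X_i| − λ)⁺. Then SURE(λ) := d + ∑_{i=1}^d (|X_i| ∧ λ)² − 2·#{i : |X_i| ≤ λ} is an unbiased estimator of the risk: E[SURE(λ)] = E[∑_{i=1}^d (η_λ(X)_i − m_i)²]. -/

import Mathlib

/-!
Write the soft-thresholding estimator as `η_λ(x) = x - clip λ x`, where `clip λ` is the projection
of `ℝ` onto `[-λ, λ]`. Then `(η_λ(X) - m)² = (X - m)² - 2 (X - m) clip λ X + (|X| ∧ λ)²`, and the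
cross term is handled by Stein's lemma `E[(X - m) g X] = E[g' X]` for `X ~ N(m, 1)`: the function
`clip λ` is bounded with derivative `1{|x| ≤ λ}` off `{-λ, λ}`. Stein's lemma itself is integration
by parts against the Gaussian density `φ`, using `φ' = -(x - m) φ`.
-/

open MeasureTheory ProbabilityTheory Real
open Filter Set Topology
open scoped NNReal

theorem integral_of_hasDerivAt_off_countable_of_tendsto {E : Type*} [NormedAddCommGroup E]
    [NormedSpace ℝ E] [CompleteSpace E] {f f' : ℝ → E} {s : Set ℝ} {a b : E}
    (hs : s.Countable) (hf : Continuous f) (hderiv : ∀ x ∉ s, HasDerivAt f (f' x) x)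
    (hf' : Integrable f') (hbot : Tendsto f atBot (𝓝 a)) (htop : Tendsto f atTop (𝓝 b)) :
    ∫ x, f' x = b - a := by
  refine tendsto_nhds_unique
    (intervalIntegral_tendsto_integral hf' tendsto_neg_atTop_atBot tendsto_id) ?_
  have hFTC (R : ℝ) : ∫ x in -R..id R, f' x = f R - f (-R) :=
    integral_eq_of_hasDerivAt_off_countable f f' hs hf.continuousOn
      (fun x hx => hderiv x hx.2) hf'.intervalIntegrable
  simp only [hFTC]
  exact htop.sub (hbot.comp tendsto_neg_atTop_atBot)

theorem hasDerivAt_gaussianPDFReal (μ : ℝ) (v : ℝ≥0) (x : ℝ) :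
    HasDerivAt (gaussianPDFReal μ v) (-((x - μ) / v) * gaussianPDFReal μ v x) x := by
  have hexponent : HasDerivAt (fun x => -(x - μ) ^ 2 / (2 * v)) (-((x - μ) / v)) x :=
    ((((hasDerivAt_id' x).sub_const μ).pow 2).neg.div_const (2 * (v : ℝ))).congr_deriv
      (by field_simp; ring)
  rw [gaussianPDFReal_def]
  exact (hexponent.exp.const_mul (√(2 * π * v))⁻¹).congr_deriv (by ring)

theorem tendsto_gaussianPDFReal_cocompact (μ : ℝ) (v : ℝ≥0) :
    Tendsto (gaussianPDFReal μ v) (cocompact ℝ) (𝓝 0) := by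
  rcases eq_or_ne v 0 with rfl | hv
  · rw [gaussianPDFReal_zero_var]
    exact tendsto_const_nhds
  have hv0 : (0 : ℝ) < v := NNReal.coe_pos.2 (pos_iff_ne_zero.2 hv)
  have hexponent : Tendsto (fun x => -(x - μ) ^ 2 / (2 * v)) (cocompact ℝ) atBot := by
    refine (tendsto_neg_atTop_atBot.comp ((tendsto_pow_atTop two_ne_zero).comp
      (tendsto_dist_right_cocompact_atTop μ))).atBot_div_const (r := 2 * (v : ℝ))
      (by positivity) |>.congr fun x => ?_
    simp [Real.dist_eq, sq_abs]
  rw [gaussianPDFReal_def]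
  simpa only [Function.comp_def, mul_zero] using
    (tendsto_exp_atBot.comp hexponent).const_mul (√(2 * π * v))⁻¹

theorem integrable_gaussianReal_iff {E : Type*} [NormedAddCommGroup E] [NormedSpace ℝ E]
    {μ : ℝ} {v : ℝ≥0} {f : ℝ → E} (hv : v ≠ 0) :
    Integrable f (gaussianReal μ v) ↔ Integrable (fun x => gaussianPDFReal μ v x • f x) := by
  rw [gaussianReal_of_var_ne_zero μ hv, integrable_withDensity_iff_integrable_smul'
    (measurable_gaussianPDF μ v) (ae_of_all _ fun _ => gaussianPDF_lt_top)]
  simp only [toReal_gaussianPDF]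

/-- Stein's lemma. -/
theorem integral_sub_mul_gaussianReal {μ : ℝ} {v : ℝ≥0} (hv : v ≠ 0) {g g' : ℝ → ℝ}
    {s : Set ℝ} {C : ℝ} (hs : s.Countable) (hg : Continuous g) (hgC : ∀ x, |g x| ≤ C)
    (hderiv : ∀ x ∉ s, HasDerivAt g (g' x) x) (hg' : Integrable g' (gaussianReal μ v)) :
    ∫ x, (x - μ) * g x ∂gaussianReal μ v = v * ∫ x, g' x ∂gaussianReal μ v := by
  set φ := gaussianPDFReal μ v
  have hint : Integrable (fun x => (x - μ) * g x) (gaussianReal μ v) :=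
    (((memLp_id_gaussianReal 1).integrable le_rfl).sub (integrable_const μ)).mul_bdd
      hg.aestronglyMeasurable (ae_of_all _ hgC)
  rw [integrable_gaussianReal_iff hv] at hint hg'
  have hlim : Tendsto (fun x => g x * φ x) (cocompact ℝ) (𝓝 0) :=
    bdd_le_mul_tendsto_zero' C (Eventually.of_forall hgC) (tendsto_gaussianPDFReal_cocompact μ v)
  have hFTC := integral_of_hasDerivAt_off_countable_of_tendsto
    (f' := fun x => φ x • g' x - (1 / v) * (φ x • ((x - μ) * g x))) hs
    (hg.mul (continuous_iff_continuousAt.2 fun x =>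
      (hasDerivAt_gaussianPDFReal μ v x).continuousAt))
    (fun x hx => ((hderiv x hx).mul (hasDerivAt_gaussianPDFReal μ v x)).congr_deriv
      (by simp only [φ, smul_eq_mul]; ring))
    (hg'.sub (hint.const_mul _)) (hlim.mono_left atBot_le_cocompact)
    (hlim.mono_left atTop_le_cocompact)
  rw [integral_sub hg' (hint.const_mul _), integral_const_mul] at hFTC
  rw [integral_gaussianReal_eq_integral_smul hv, integral_gaussianReal_eq_integral_smul hv]
  have hv0 : (v : ℝ) ≠ 0 := NNReal.coe_ne_zero.2 hv
  field_simp at hFTC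
  linarith

theorem integral_sub_sq_gaussianReal (μ : ℝ) (v : ℝ≥0) :
    ∫ x, (x - μ) ^ 2 ∂gaussianReal μ v = v := by
  have hvar := variance_eq_integral (μ := gaussianReal μ v) (X := fun x => x) aemeasurable_id'
  rw [variance_fun_id_gaussianReal, integral_id_gaussianReal] at hvar
  exact hvar.symm

theorem integrable_min_abs_sq (ν : Measure ℝ) [IsFiniteMeasure ν] (l : ℝ) :
    Integrable (fun x => min |x| l ^ 2) ν :=
  Integrable.of_bound (by fun_prop) (l ^ 2) (ae_of_all _ fun x => by
    rw [Real.norm_eq_abs, abs_pow, ← sq_abs l]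
    exact pow_le_pow_left₀ (abs_nonneg _) (by grind) 2)

theorem integrable_ite_abs_le (ν : Measure ℝ) [IsFiniteMeasure ν] (l : ℝ) :
    Integrable (fun x => if |x| ≤ l then (1 : ℝ) else 0) ν :=
  Integrable.of_bound
    (Measurable.ite (measurableSet_le measurable_abs measurable_const) measurable_const
      measurable_const).aestronglyMeasurable 1
    (ae_of_all _ fun x => by split_ifs <;> simp)

def clip (l x : ℝ) : ℝ := max (-l) (min x l)

theorem continuous_clip (l : ℝ) : Continuous (clip l) := by
  unfold clip
  fun_prop

theorem abs_clip_le {l : ℝ} (hl : 0 ≤ l) (x : ℝ) : |clip l x| ≤ l :=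
  abs_le.2 ⟨le_max_left _ _, max_le (by linarith) (min_le_right _ _)⟩

theorem clip_sq {l : ℝ} (hl : 0 ≤ l) (x : ℝ) : clip l x ^ 2 = min |x| l ^ 2 := by
  unfold clip
  rcases le_total 0 x with hx | hx
  · rw [abs_of_nonneg hx]; grind
  · rw [abs_of_nonpos hx]; grind

theorem hasDerivAt_clip {l x : ℝ} (hx : x ≠ -l) (hx' : x ≠ l) :
    HasDerivAt (clip l) (if |x| ≤ l then 1 else 0) x := by
  rcases lt_or_gt_of_ne hx with hlt | hgt
  · rw [if_neg fun h => by linarith [neg_abs_le x, abs_le.1 h]]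
    refine (hasDerivAt_const x (-l)).congr_of_eventuallyEq ?_
    filter_upwards [Iio_mem_nhds hlt] with y hy
    simp only [clip, mem_Iio] at hy ⊢
    grind
  rcases lt_or_gt_of_ne hx' with hlt | hgt'
  · rw [if_pos (abs_le.2 ⟨hgt.le, hlt.le⟩)]
    refine (hasDerivAt_id x).congr_of_eventuallyEq ?_
    filter_upwards [Ioo_mem_nhds hgt hlt] with y hy
    simp [clip, hy.1.le, hy.2.le]
  · rw [if_neg fun h => by linarith [le_abs_self x]]
    refine (hasDerivAt_const x (max (-l) l)).congr_of_eventuallyEq ?_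
    filter_upwards [Ioi_mem_nhds hgt'] with y hy
    simp [clip, (show l ≤ y from hy.le)]

theorem integral_sub_mul_clip_gaussianReal {μ : ℝ} {v : ℝ≥0} (hv : v ≠ 0) {l : ℝ} (hl : 0 ≤ l) :
    ∫ x, (x - μ) * clip l x ∂gaussianReal μ v
      = v * ∫ x, (if |x| ≤ l then 1 else 0) ∂gaussianReal μ v :=
  integral_sub_mul_gaussianReal hv ((countable_singleton (-l)).insert l) (continuous_clip l)
    (abs_clip_le hl) (fun x hx => hasDerivAt_clip (by simp_all) (by simp_all))
    (integrable_ite_abs_le _ l)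

noncomputable def softThreshold (l x : ℝ) : ℝ := Real.sign x * max (|x| - l) 0

theorem softThreshold_eq_sub_clip {l : ℝ} (hl : 0 ≤ l) (x : ℝ) :
    softThreshold l x = x - clip l x := by
  unfold softThreshold clip
  rcases lt_trichotomy x 0 with hx | rfl | hx
  · rw [sign_of_neg hx, abs_of_neg hx]; grind
  · simp [hl]
  · rw [sign_of_pos hx, abs_of_pos hx]; grind

theorem memLp_softThreshold_sub_gaussianReal (μ : ℝ) (v : ℝ≥0) {l : ℝ} (hl : 0 ≤ l) :
    MemLp (fun x => softThreshold l x - μ) 2 (gaussianReal μ v) := by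
  simp_rw [softThreshold_eq_sub_clip hl, sub_right_comm _ (clip l _)]
  exact ((memLp_id_gaussianReal 2).sub (memLp_const μ)).sub
    (MemLp.of_bound (continuous_clip l).aestronglyMeasurable l (ae_of_all _ (abs_clip_le hl)))

noncomputable def softThresholdSURE (v l x : ℝ) : ℝ :=
  v + min |x| l ^ 2 - 2 * v * if |x| ≤ l then 1 else 0

theorem integrable_softThresholdSURE (ν : Measure ℝ) [IsFiniteMeasure ν] (v l : ℝ) :
    Integrable (softThresholdSURE v l) ν :=
  ((integrable_const v).add (integrable_min_abs_sq ν l)).sub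
    ((integrable_ite_abs_le ν l).const_mul _)

theorem integral_softThresholdSURE_gaussianReal {μ : ℝ} {v : ℝ≥0} (hv : v ≠ 0) {l : ℝ}
    (hl : 0 ≤ l) :
    ∫ x, softThresholdSURE v l x ∂gaussianReal μ v
      = ∫ x, (softThreshold l x - μ) ^ 2 ∂gaussianReal μ v := by
  have hexpand (x : ℝ) : (softThreshold l x - μ) ^ 2
      = (x - μ) ^ 2 - 2 * ((x - μ) * clip l x) + min |x| l ^ 2 := by
    rw [softThreshold_eq_sub_clip hl, ← clip_sq hl]
    ring
  have hsq : Integrable (fun x => (x - μ) ^ 2) (gaussianReal μ v) :=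
    ((memLp_id_gaussianReal 2).sub (memLp_const μ)).integrable_sq
  have hcross : Integrable (fun x => (x - μ) * clip l x) (gaussianReal μ v) :=
    (((memLp_id_gaussianReal 1).integrable le_rfl).sub (integrable_const μ)).mul_bdd
      (continuous_clip l).aestronglyMeasurable (ae_of_all _ (abs_clip_le hl))
  have hmin := integrable_min_abs_sq (gaussianReal μ v) l
  simp_rw [hexpand, softThresholdSURE]
  rw [integral_add (f := fun x => (x - μ) ^ 2 - 2 * ((x - μ) * clip l x))
      (hsq.sub (hcross.const_mul 2)) hmin, integral_sub hsq (hcross.const_mul 2),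
    integral_sub (f := fun x => (v : ℝ) + min |x| l ^ 2) ((integrable_const _).add hmin)
      ((integrable_ite_abs_le _ l).const_mul _),
    integral_add (integrable_const _) hmin, integral_const_mul, integral_const_mul,
    integral_sub_mul_clip_gaussianReal hv hl, integral_sub_sq_gaussianReal, integral_const]
  simp only [probReal_univ, smul_eq_mul, one_mul]
  ring

theorem sum_softThresholdSURE {ι : Type*} [Fintype ι] (v l : ℝ) (x : ι → ℝ) :
    ∑ i, softThresholdSURE v l (x i)
      = Fintype.card ι * v + ∑ i, min |x i| l ^ 2
        - 2 * v * (Finset.univ.filter fun i => |x i| ≤ l).card := by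
  simp only [softThresholdSURE, Finset.sum_sub_distrib, Finset.sum_add_distrib, ← Finset.mul_sum,
    Finset.sum_boole, Finset.sum_const, Finset.card_univ, nsmul_eq_mul]

theorem sure_soft_threshold_unbiased_general
    {Ω : Type*} [MeasurableSpace Ω] {P : Measure Ω}
    (d : ℕ) (X : Fin d → Ω → ℝ) (m : Fin d → ℝ)
    (hLaw : ∀ i, Measure.map (X i) P = gaussianReal (m i) 1)
    (l : ℝ) (hl : 0 ≤ l) :
    ∫ ω, ((d : ℝ) + ∑ i, (min |X i ω| l) ^ 2
        - 2 * ((Finset.univ.filter fun i => |X i ω| ≤ l).card : ℝ)) ∂P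
      = ∫ ω, ∑ i, (Real.sign (X i ω) * max (|X i ω| - l) 0 - m i) ^ 2 ∂P := by
  -- `Measure.map` sends a non-a.e.-measurable function to the zero measure.
  have hX (i : Fin d) : AEMeasurable (X i) P :=
    .of_map_ne_zero (hLaw i ▸ IsProbabilityMeasure.ne_zero _)
  have hsure (i : Fin d) : Integrable (softThresholdSURE 1 l) (P.map (X i)) := by
    rw [hLaw i]
    exact integrable_softThresholdSURE _ 1 l
  have hrisk (i : Fin d) : Integrable (fun x => (softThreshold l x - m i) ^ 2) (P.map (X i)) := by
    rw [hLaw i]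
    exact (memLp_softThreshold_sub_gaussianReal (m i) 1 hl).integrable_sq
  have hLHS (ω : Ω) : (d : ℝ) + ∑ i, (min |X i ω| l) ^ 2
      - 2 * ((Finset.univ.filter fun i => |X i ω| ≤ l).card : ℝ)
      = ∑ i, softThresholdSURE 1 l (X i ω) := by
    simp only [sum_softThresholdSURE, Fintype.card_fin, mul_one]
  change _ = ∫ ω, ∑ i, (softThreshold l (X i ω) - m i) ^ 2 ∂P
  simp_rw [hLHS]
  rw [integral_finsetSum (f := fun i ω => softThresholdSURE 1 l (X i ω)) _
      fun i _ => (hsure i).comp_aemeasurable (hX i),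
    integral_finsetSum (f := fun i ω => (softThreshold l (X i ω) - m i) ^ 2) _
      fun i _ => (hrisk i).comp_aemeasurable (hX i)]
  refine Finset.sum_congr rfl fun i _ => ?_
  rw [← integral_map (hX i) (hsure i).aestronglyMeasurable,
    ← integral_map (hX i) (hrisk i).aestronglyMeasurable, hLaw i]
  simpa only [NNReal.coe_one] using integral_softThresholdSURE_gaussianReal one_ne_zero hl

/-- SURE for soft thresholding is unbiased: for `X₁,…,X_d` independent with
`X_i ~ N(m_i, 1)` and soft-thresholding estimator
`η_λ(X)_i = sign(X_i)(|X_i|−λ)⁺`, with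
`SURE(λ) = d + ∑ (|X_i| ∧ λ)² − 2 #{i : |X_i| ≤ λ}`, one has
`E[SURE(λ)] = E[∑ (η_λ(X)_i − m_i)²]`. -/
theorem sure_soft_threshold_unbiased
    {Ω : Type*} [MeasurableSpace Ω] {P : Measure Ω} [IsProbabilityMeasure P]
    (d : ℕ) (X : Fin d → Ω → ℝ) (m : Fin d → ℝ)
    (hmeas : ∀ i, Measurable (X i))
    (hIndep : iIndepFun X P)
    (hLaw : ∀ i, Measure.map (X i) P = gaussianReal (m i) 1)
    (l : ℝ) (hl : 0 ≤ l) :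
    ∫ ω, ((d : ℝ) + ∑ i, (min |X i ω| l) ^ 2
        - 2 * ((Finset.univ.filter fun i => |X i ω| ≤ l).card : ℝ)) ∂P
      = ∫ ω, ∑ i, (Real.sign (X i ω) * max (|X i ω| - l) 0 - m i) ^ 2 ∂P :=
  sure_soft_threshold_unbiased_general d X m hLaw l hl
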